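/- Suppose θ is an A-projective substitution and A† is a formula containing only parameters with IPC ⊢ θ(A) ↔ A†. Then for any proposition B: IPC ⊢ A → B if and only if IPC ⊢ θ(A† → B). -/
import Mathlib


inductive Fm : Type
  | bot : Fm
  | atom : ℕ → Fm
  | and : Fm → Fm → Fm
  | or : Fm → Fm → Fm
  | imp : Fm → Fm → Fm
deriving DecidableEq

namespace Fm

def neg (A : Fm) : Fm := A.imp .bot
def top : Fm := Fm.bot.imp .bot
def iff (A B : Fm) : Fm := (A.imp B).and (B.imp A)

def subst (θ : ℕ → Fm) : Fm → Fm
  | bot => bot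
  | atom n => θ n
  | and A B => (A.subst θ).and (B.subst θ)
  | or A B => (A.subst θ).or (B.subst θ)
  | imp A B => (A.subst θ).imp (B.subst θ)

def atoms : Fm → Finset ℕ
  | bot => ∅
  | atom n => {n}
  | and A B => A.atoms ∪ B.atoms
  | or A B => A.atoms ∪ B.atoms
  | imp A B => A.atoms ∪ B.atoms

/-- maximal nesting of implications in the left/overall: `c→`. -/
def cimp : Fm → ℕ
  | bot => 0
  | atom _ => 0
  | and A B => max A.cimp B.cimp
  | or A B => max A.cimp B.cimp
  | imp A B => 1 + max A.cimp B.cimp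

end Fm

def bigAndL (l : List Fm) : Fm := l.foldr Fm.and Fm.top
def bigOrL (l : List Fm) : Fm := l.foldr Fm.or Fm.bot

/-- nonempty disjunction -/
def bigOrNE : Fm → List Fm → Fm
  | A, [] => A
  | A, B :: l => A.or (bigOrNE B l)

/-- Hilbert-style intuitionistic propositional calculus. -/
inductive IPC : Fm → Prop
  | imp_k (A B : Fm) : IPC (A.imp (B.imp A))
  | imp_s (A B C : Fm) : IPC ((A.imp (B.imp C)).imp ((A.imp B).imp (A.imp C)))
  | and_intro (A B : Fm) : IPC (A.imp (B.imp (A.and B)))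
  | and_left (A B : Fm) : IPC ((A.and B).imp A)
  | and_right (A B : Fm) : IPC ((A.and B).imp B)
  | or_inl (A B : Fm) : IPC (A.imp (A.or B))
  | or_inr (A B : Fm) : IPC (B.imp (A.or B))
  | or_elim (A B C : Fm) : IPC ((A.imp C).imp ((B.imp C).imp ((A.or B).imp C)))
  | exfalso (A : Fm) : IPC (Fm.bot.imp A)
  | mp {A B : Fm} : IPC (A.imp B) → IPC A → IPC B

/-- Γ-preservativity in the logic T : `A ⊳_{T,Γ} B`. -/
def Pres (T : Fm → Prop) (Γ : Set Fm) (A B : Fm) : Prop :=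
  ∀ E ∈ Γ, T (E.imp A) → T (E.imp B)

/-- substitutions are identity on the parameters. -/
def IdOnPar (par : Finset ℕ) (θ : ℕ → Fm) : Prop :=
  ∀ p ∈ par, θ p = Fm.atom p

/-- implication-free formulas. -/
inductive NI : Fm → Prop
  | bot : NI .bot
  | atom (n : ℕ) : NI (.atom n)
  | and {A B : Fm} : NI A → NI B → NI (A.and B)
  | or {A B : Fm} : NI A → NI B → NI (A.or B)

/-- No Nested Implications in the Left. -/
inductive NNIL : Fm → Prop
  | bot : NNIL .bot
  | atom (n : ℕ) : NNIL (.atom n)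
  | and {A B : Fm} : NNIL A → NNIL B → NNIL (A.and B)
  | or {A B : Fm} : NNIL A → NNIL B → NNIL (A.or B)
  | imp {A B : Fm} : NI A → NNIL B → NNIL (A.imp B)

def IPCPrime (A : Fm) : Prop :=
  ∀ B C, IPC (A.imp (B.or C)) → IPC (A.imp B) ∨ IPC (A.imp C)

/-- T-components: `⋀Γ ∧ ⋀Δ`, Γ atoms, Δ implications with atomic
antecedents not T-provable from Γ. -/
def IsComponentOver (T : Fm → Prop) (B : Fm) : Prop :=
  ∃ (as : List ℕ) (imps : List (ℕ × Fm)),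
    B = (bigAndL (as.map Fm.atom)).and
          (bigAndL (imps.map fun p => (Fm.atom p.1).imp p.2)) ∧
    ∀ p ∈ imps, ¬ T ((bigAndL (as.map Fm.atom)).imp (Fm.atom p.1))

section Aux

inductive Der (Γ : Set Fm) : Fm → Prop
  | hyp {B} : B ∈ Γ → Der Γ B
  | thm {B} : IPC B → Der Γ B
  | mp {A B} : Der Γ (A.imp B) → Der Γ A → Der Γ B

lemma IPC.id (A : Fm) : IPC (A.imp A) :=
  (IPC.imp_s A (A.imp A) A).mp (IPC.imp_k A (A.imp A)) |>.mp (IPC.imp_k A A)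

lemma Der.weak {Γ Γ' : Set Fm} (h : Γ ⊆ Γ') {B : Fm} : Der Γ B → Der Γ' B := by
  intro hd
  induction hd with
  | hyp hb => exact Der.hyp (h hb)
  | thm ht => exact Der.thm ht
  | mp _ _ ih1 ih2 => exact Der.mp ih1 ih2

lemma Der.of_empty {B : Fm} (h : Der ∅ B) : IPC B := by
  induction h with
  | hyp hb => exact absurd hb (Set.notMem_empty _)
  | thm ht => exact ht
  | mp _ _ ih1 ih2 => exact ih1.mp ih2

lemma Der.deduction {Γ : Set Fm} {A B : Fm} (h : Der (insert A Γ) B) :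
    Der Γ (A.imp B) := by
  induction h with
  | @hyp C hb =>
    rcases Set.mem_insert_iff.mp hb with rfl | hb
    · exact Der.thm (IPC.id _)
    · exact Der.mp (Der.thm (IPC.imp_k C A)) (Der.hyp hb)
  | @thm C ht => exact Der.mp (Der.thm (IPC.imp_k C A)) (Der.thm ht)
  | @mp X Y _ _ ih1 ih2 =>
    exact Der.mp (Der.mp (Der.thm (IPC.imp_s A X Y)) ih1) ih2

lemma Der.self {Γ : Set Fm} {A : Fm} (h : A ∈ Γ) : Der Γ A := Der.hyp h

lemma Der.trans {Γ : Set Fm} {X Y Z : Fm} (h1 : Der Γ (X.imp Y))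
    (h2 : Der Γ (Y.imp Z)) : Der Γ (X.imp Z) := by
  apply Der.deduction
  exact Der.mp (h2.weak (Set.subset_insert _ _))
    (Der.mp (h1.weak (Set.subset_insert _ _)) (Der.hyp (Set.mem_insert _ _)))

lemma Der.iff_intro {Γ : Set Fm} {C D : Fm} (h1 : Der Γ (C.imp D))
    (h2 : Der Γ (D.imp C)) : Der Γ (C.iff D) :=
  Der.mp (Der.mp (Der.thm (IPC.and_intro _ _)) h1) h2

lemma Der.iff_mp1 {Γ : Set Fm} {C D : Fm} (h : Der Γ (C.iff D)) :
    Der Γ (C.imp D) := Der.mp (Der.thm (IPC.and_left _ _)) h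

lemma Der.iff_mp2 {Γ : Set Fm} {C D : Fm} (h : Der Γ (C.iff D)) :
    Der Γ (D.imp C) := Der.mp (Der.thm (IPC.and_right _ _)) h

lemma Der.and_mono {Γ : Set Fm} {C C' D D' : Fm} (h1 : Der Γ (C.imp C'))
    (h2 : Der Γ (D.imp D')) : Der Γ ((C.and D).imp (C'.and D')) := by
  apply Der.deduction
  have hh : Der (insert (C.and D) Γ) (C.and D) := Der.hyp (Set.mem_insert _ _)
  have hc := Der.mp (h1.weak (Set.subset_insert _ _))
    (Der.mp (Der.thm (IPC.and_left C D)) hh)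
  have hd := Der.mp (h2.weak (Set.subset_insert _ _))
    (Der.mp (Der.thm (IPC.and_right C D)) hh)
  exact Der.mp (Der.mp (Der.thm (IPC.and_intro _ _)) hc) hd

lemma Der.or_mono {Γ : Set Fm} {C C' D D' : Fm} (h1 : Der Γ (C.imp C'))
    (h2 : Der Γ (D.imp D')) : Der Γ ((C.or D).imp (C'.or D')) := by
  have hl : Der Γ (C.imp (C'.or D')) := h1.trans (Der.thm (IPC.or_inl _ _))
  have hr : Der Γ (D.imp (C'.or D')) := h2.trans (Der.thm (IPC.or_inr _ _))
  exact Der.mp (Der.mp (Der.thm (IPC.or_elim _ _ _)) hl) hr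

lemma Der.imp_mono {Γ : Set Fm} {C C' D D' : Fm} (h1 : Der Γ (C'.imp C))
    (h2 : Der Γ (D.imp D')) : Der Γ ((C.imp D).imp (C'.imp D')) := by
  apply Der.deduction
  apply Der.deduction
  have sub : Γ ⊆ insert C' (insert (C.imp D) Γ) :=
    (Set.subset_insert _ _).trans (Set.subset_insert _ _)
  have hc' : Der (insert C' (insert (C.imp D) Γ)) C' := Der.hyp (Set.mem_insert _ _)
  have hc := Der.mp (h1.weak sub) hc'
  have hcd : Der (insert C' (insert (C.imp D) Γ)) (C.imp D) :=
    Der.hyp (Set.mem_insert_of_mem _ (Set.mem_insert _ _))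
  exact Der.mp (h2.weak sub) (Der.mp hcd hc)

lemma Der.iff_congr {Γ : Set Fm} {C C' D D' : Fm} (h1 : Der Γ (C.iff C'))
    (h2 : Der Γ (D.iff D')) :
    Der Γ ((C.and D).iff (C'.and D')) ∧ Der Γ ((C.or D).iff (C'.or D')) ∧
      Der Γ ((C.imp D).iff (C'.imp D')) :=
  ⟨Der.iff_intro (Der.and_mono h1.iff_mp1 h2.iff_mp1)
      (Der.and_mono h1.iff_mp2 h2.iff_mp2),
   Der.iff_intro (Der.or_mono h1.iff_mp1 h2.iff_mp1)
      (Der.or_mono h1.iff_mp2 h2.iff_mp2),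
   Der.iff_intro (Der.imp_mono h1.iff_mp2 h2.iff_mp1)
      (Der.imp_mono h1.iff_mp1 h2.iff_mp2)⟩

/-- IPC is closed under substitution. -/
lemma IPC.subst_closed {C : Fm} (θ : ℕ → Fm) (h : IPC C) : IPC (C.subst θ) := by
  induction h with
  | imp_k A B => exact IPC.imp_k _ _
  | imp_s A B C => exact IPC.imp_s _ _ _
  | and_intro A B => exact IPC.and_intro _ _
  | and_left A B => exact IPC.and_left _ _
  | and_right A B => exact IPC.and_right _ _
  | or_inl A B => exact IPC.or_inl _ _
  | or_inr A B => exact IPC.or_inr _ _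
  | or_elim A B C => exact IPC.or_elim _ _ _
  | exfalso A => exact IPC.exfalso _
  | mp _ _ ih1 ih2 => exact ih1.mp ih2

lemma subst_eq_of_atoms {par : Finset ℕ} {θ : ℕ → Fm} (hθ : IdOnPar par θ) :
    ∀ {C : Fm}, C.atoms ⊆ par → C.subst θ = C := by
  intro C
  induction C with
  | bot => intro _; rfl
  | atom n =>
      intro h
      exact hθ n (h (by simp [Fm.atoms]))
  | and A B ihA ihB =>
      intro h
      have h' : A.atoms ⊆ par ∧ B.atoms ⊆ par := by
        constructor <;> intro x hx <;> exact h (by simp [Fm.atoms, hx])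
      simp [Fm.subst, ihA h'.1, ihB h'.2]
  | or A B ihA ihB =>
      intro h
      have h' : A.atoms ⊆ par ∧ B.atoms ⊆ par := by
        constructor <;> intro x hx <;> exact h (by simp [Fm.atoms, hx])
      simp [Fm.subst, ihA h'.1, ihB h'.2]
  | imp A B ihA ihB =>
      intro h
      have h' : A.atoms ⊆ par ∧ B.atoms ⊆ par := by
        constructor <;> intro x hx <;> exact h (by simp [Fm.atoms, hx])
      simp [Fm.subst, ihA h'.1, ihB h'.2]

end Aux

theorem stmt_6 (par : Finset ℕ) (A Adag B : Fm) (θ : ℕ → Fm)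
    (hθ : IdOnPar par θ)
    (hproj : ∀ a : ℕ, IPC (A.imp ((Fm.atom a).iff (θ a))))
    (hpar : Adag.atoms ⊆ par) (heq : IPC ((A.subst θ).iff Adag)) :
    IPC (A.imp B) ↔ IPC ((Adag.imp B).subst θ) := by
  have hAdag : Adag.subst θ = Adag := subst_eq_of_atoms hθ hpar
  have hgoal : (Adag.imp B).subst θ = Adag.imp (B.subst θ) := by
    simp [Fm.subst, hAdag]
  rw [hgoal]
  -- the projectivity lemma, extended to all formulas
  have hproj' : ∀ C : Fm, Der (insert A ∅) (C.iff (C.subst θ)) := by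
    intro C
    induction C with
    | bot => exact Der.iff_intro (Der.thm (IPC.id _)) (Der.thm (IPC.id _))
    | atom n =>
        exact Der.mp (Der.thm (hproj n)) (Der.hyp (Set.mem_insert _ _))
    | and C D ihC ihD => exact (Der.iff_congr ihC ihD).1
    | or C D ihC ihD => exact (Der.iff_congr ihC ihD).2.1
    | imp C D ihC ihD => exact (Der.iff_congr ihC ihD).2.2
  have heqD : Der (∅ : Set Fm) ((A.subst θ).iff Adag) := Der.thm heq
  constructor
  · intro hAB
    have h1 : IPC ((A.subst θ).imp (B.subst θ)) := by
      have := IPC.subst_closed θ hAB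
      simpa [Fm.subst] using this
    exact (heqD.iff_mp2.trans (Der.thm h1)).of_empty
  · intro h
    have h1 : Der (∅ : Set Fm) ((A.subst θ).imp (B.subst θ)) :=
      heqD.iff_mp1.trans (Der.thm h)
    -- work under hypothesis A
    have hAθ : Der (insert A ∅) (A.subst θ) :=
      Der.mp (hproj' A).iff_mp1 (Der.hyp (Set.mem_insert _ _))
    have hBθ : Der (insert A ∅) (B.subst θ) :=
      Der.mp (h1.weak (Set.empty_subset _)) hAθ
    have hB : Der (insert A ∅) B := Der.mp (hproj' B).iff_mp2 hBθ
    exact hB.deduction.of_empty
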